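/- Let X be a set, I a nonempty finite set, and (f_i)_{i∈I} a family of functions f_i : X → X having attractor A. If α, β ∈ Λ(I) satisfy a_α ≠ a_β, then there exists n₀ ∈ ℕ such that X̃_{[α]_{n₀}} ∩ X̃_{[β]_{n₀}} = ∅, where X̃_γ = X_γ ∪ Y_γ for every finite word γ. -/

import Mathlib

open Filter Topology Set

/-- `φ : [0,∞) → [0,∞)` is a comparison function: it maps `[0,∞)` into `[0,∞)`,
is increasing, satisfies `φ t < t` for `t > 0`, and is right-continuous. -/
def IsComparisonFn (φ : ℝ → ℝ) : Prop :=
  (∀ t : ℝ, 0 ≤ t → 0 ≤ φ t) ∧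
  MonotoneOn φ (Set.Ici (0 : ℝ)) ∧
  (∀ t : ℝ, 0 < t → φ t < t) ∧
  (∀ t : ℝ, 0 ≤ t → ContinuousWithinAt φ (Set.Ici t) t)

/-- `f_{α₁…αₙ} = f_{α₁} ∘ f_{α₂} ∘ … ∘ f_{αₙ}` (the identity for the empty word). -/
def WordMap {X I : Type*} (f : I → X → X) : List I → X → X
  | [] => id
  | i :: w => f i ∘ WordMap f w

/-- `[α]_n`: the finite word consisting of the first `n` letters of the infinite word `α`. -/
def Pref {I : Type*} (α : ℕ → I) (n : ℕ) : List I := List.ofFn (fun k : Fin n => α (k : ℕ))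

/-- `X_w = f_w(X)`, the image of the whole space under the word map. -/
def WordSet {X I : Type*} (f : I → X → X) (w : List I) : Set X := Set.range (WordMap f w)

/-- A family `(f_i)_{i ∈ I}` of self-maps of `X` has attractor if:
(a) for every infinite word `α`, `⋂ₙ X_{[α]ₙ}` has a unique element `a_α`;
(b) whenever `a_α ≠ a_β`, some `X_{[α]_{n₀}}` and `X_{[β]_{n₀}}` are disjoint. -/
def HasAttractor {X I : Type*} (f : I → X → X) : Prop :=
  (∀ α : ℕ → I, ∃! a : X, ∀ n : ℕ, a ∈ WordSet f (Pref α n)) ∧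
  (∀ α β : ℕ → I, ∀ a b : X,
    (∀ n : ℕ, a ∈ WordSet f (Pref α n)) → (∀ n : ℕ, b ∈ WordSet f (Pref β n)) →
    a ≠ b →
    ∃ n₀ : ℕ, WordSet f (Pref α n₀) ∩ WordSet f (Pref β n₀) = ∅)

/-- Given a selection `a` of the points `a_β`,
`Y_w = {a_β : β ∈ Λ(I), X_w ∩ X_{[β]ₙ} ≠ ∅ for every n}`. -/
def YSet {X I : Type*} (f : I → X → X) (a : (ℕ → I) → X) (w : List I) : Set X :=
  {y | ∃ β : ℕ → I, y = a β ∧ ∀ n : ℕ, (WordSet f w ∩ WordSet f (Pref β n)).Nonempty}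

/-- `X̃_w = X_w ∪ Y_w`. -/
def XtSet {X I : Type*} (f : I → X → X) (a : (ℕ → I) → X) (w : List I) : Set X :=
  WordSet f w ∪ YSet f a w

/-!
Suppose every `X̃_{[α]ₙ}` meets `X̃_{[β]ₙ}`. Beyond the level where `X_{[α]ₙ}` and `X_{[β]ₙ}` are
disjoint, a common point must be an attractor point `a_{γₙ} = a_{δₙ}` with `X_{[α]ₙ}` meeting
every cylinder of `γₙ` and `X_{[β]ₙ}` every cylinder of `δₙ`. Since `I` is finite, `γₙ` and `δₙ`
have letterwise limits `Γ`, `Δ` along an ultrafilter, and then the cylinders of `α` and `Γ`, of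
`Γ` and `Δ`, and of `Δ` and `β` meet at every level. Property (b) of the attractor turns each of
these into an equality, so `a_α = a_Γ = a_Δ = a_β`.
-/

section Words

variable {X I : Type*} (f : I → X → X)

lemma wordMap_append (u v : List I) : WordMap f (u ++ v) = WordMap f u ∘ WordMap f v := by
  induction u with
  | nil => rfl
  | cons i w ih => simp [WordMap, ih, Function.comp_assoc]

lemma wordSet_append_subset (u v : List I) : WordSet f (u ++ v) ⊆ WordSet f u := by
  rw [WordSet, wordMap_append]
  exact range_comp_subset_range _ _

lemma pref_add (α : ℕ → I) (n m : ℕ) :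
    Pref α (n + m) = Pref α n ++ Pref (fun k => α (n + k)) m := by
  simp [Pref, List.ofFn_add]

lemma pref_congr {α β : ℕ → I} {n : ℕ} (h : ∀ k < n, α k = β k) : Pref α n = Pref β n :=
  congrArg List.ofFn (funext fun k => h k k.isLt)

lemma antitone_wordSet_pref (α : ℕ → I) : Antitone fun n => WordSet f (Pref α n) := by
  intro n n' h
  obtain ⟨m, rfl⟩ := Nat.exists_eq_add_of_le h
  simp only [pref_add]
  exact wordSet_append_subset f _ _

def MeetsCylinders (w : List I) (β : ℕ → I) : Prop :=
  ∀ n, (WordSet f w ∩ WordSet f (Pref β n)).Nonempty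

variable {f}

lemma MeetsCylinders.mono {u v : List I} {β : ℕ → I} (h : MeetsCylinders f u β)
    (huv : WordSet f u ⊆ WordSet f v) : MeetsCylinders f v β :=
  fun n => (h n).mono (inter_subset_inter_left _ huv)

end Words

lemma Ultrafilter.exists_eventually_eq_of_finite {ι C : Type*} [Finite C] (U : Ultrafilter ι)
    (x : ι → C) : ∃ c, ∀ᶠ i in (U : Filter ι), x i = c := by
  obtain ⟨c, hc⟩ := (U.map x).eq_pure_of_finite
  exact ⟨c, show ∀ᶠ y in ((U.map x : Ultrafilter C) : Filter C), y = c by rw [hc]; rfl⟩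

-- König's lemma: along an ultrafilter, words over a finite alphabet converge letter by letter.
lemma exists_eventually_pref_eq {ι I : Type*} [Finite I] (U : Ultrafilter ι) (γ : ι → ℕ → I) :
    ∃ Γ : ℕ → I, ∀ n, ∀ᶠ i in (U : Filter ι), Pref (γ i) n = Pref Γ n := by
  choose Γ hΓ using fun k => U.exists_eventually_eq_of_finite fun i => γ i k
  refine ⟨Γ, fun n => ?_⟩
  have hagree : ∀ᶠ i in (U : Filter ι), ∀ k : Fin n, γ i k = Γ k :=
    eventually_all.2 fun k => hΓ k
  exact hagree.mono fun i hi => pref_congr fun k hk => hi ⟨k, hk⟩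

section Attractor

variable {X I : Type*} {f : I → X → X} {a : (ℕ → I) → X}

lemma eq_of_forall_wordSet_pref_inter_nonempty (hF : HasAttractor f)
    (ha : ∀ (α : ℕ → I) (n : ℕ), a α ∈ WordSet f (Pref α n)) {α β : ℕ → I}
    (h : ∀ n, (WordSet f (Pref α n) ∩ WordSet f (Pref β n)).Nonempty) : a α = a β := by
  by_contra hne
  obtain ⟨n, hn⟩ := hF.2 α β (a α) (a β) (ha α) (ha β) hne
  exact (h n).ne_empty hn

lemma meetsCylinders_of_mem (ha : ∀ (α : ℕ → I) (n : ℕ), a α ∈ WordSet f (Pref α n))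
    {w : List I} {β : ℕ → I} (h : a β ∈ WordSet f w) : MeetsCylinders f w β :=
  fun n => ⟨a β, h, ha β n⟩

lemma exists_meetsCylinders_of_mem_xtSet_inter
    (ha : ∀ (α : ℕ → I) (n : ℕ), a α ∈ WordSet f (Pref α n)) {u v : List I} {z : X}
    (hz : z ∈ XtSet f a u ∩ XtSet f a v) (huv : WordSet f u ∩ WordSet f v = ∅) :
    ∃ γ δ : ℕ → I, a γ = a δ ∧ MeetsCylinders f u γ ∧ MeetsCylinders f v δ := by
  obtain ⟨hzu | ⟨γ, rfl, hγ⟩, hzv | ⟨δ, hzδ, hδ⟩⟩ := hz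
  · exact (eq_empty_iff_forall_notMem.1 huv z ⟨hzu, hzv⟩).elim
  · subst hzδ
    exact ⟨δ, δ, rfl, meetsCylinders_of_mem ha hzu, hδ⟩
  · exact ⟨γ, γ, rfl, hγ, meetsCylinders_of_mem ha hzv⟩
  · exact ⟨γ, δ, hzδ, hγ, hδ⟩

lemma wordSet_pref_inter_nonempty_of_frequently {α Γ : ℕ → I} {γ : ℕ → ℕ → I}
    (hγ : ∀ n, MeetsCylinders f (Pref α n) (γ n))
    (hΓ : ∀ m, ∃ᶠ n in atTop, Pref (γ n) m = Pref Γ m) (m : ℕ) :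
    (WordSet f (Pref α m) ∩ WordSet f (Pref Γ m)).Nonempty := by
  obtain ⟨n, hmn, hpref⟩ := frequently_atTop.1 (hΓ m) m
  obtain ⟨y, hyα, hyγ⟩ := hγ n m
  exact ⟨y, antitone_wordSet_pref f α hmn hyα, hpref ▸ hyγ⟩

end Attractor

theorem XtSet_separation_general {X I : Type*} [Finite I]
    (f : I → X → X) (hF : HasAttractor f)
    (a : (ℕ → I) → X) (ha : ∀ (α : ℕ → I) (n : ℕ), a α ∈ WordSet f (Pref α n)) :
    ∀ α β : ℕ → I, a α ≠ a β →
      ∃ n₀ : ℕ, XtSet f a (Pref α n₀) ∩ XtSet f a (Pref β n₀) = ∅ := by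
  intro α β hne
  by_contra! hmeet
  obtain ⟨n₁, hn₁⟩ := hF.2 α β (a α) (a β) (ha α) (ha β) hne
  have hdisj : ∀ n, WordSet f (Pref α (n + n₁)) ∩ WordSet f (Pref β (n + n₁)) = ∅ := fun n =>
    subset_empty_iff.1 <| hn₁ ▸ inter_subset_inter
      (antitone_wordSet_pref f α (Nat.le_add_left _ _))
      (antitone_wordSet_pref f β (Nat.le_add_left _ _))
  choose γ δ hγδ hγ hδ using fun n =>
    exists_meetsCylinders_of_mem_xtSet_inter ha (hmeet (n + n₁)).some_mem (hdisj n)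
  obtain ⟨Γ, hΓ⟩ := exists_eventually_pref_eq (Ultrafilter.of atTop) γ
  obtain ⟨Δ, hΔ⟩ := exists_eventually_pref_eq (Ultrafilter.of atTop) δ
  have hlim : ∀ m, ∃ᶠ n in atTop, Pref (γ n) m = Pref Γ m ∧ Pref (δ n) m = Pref Δ m :=
    fun m => ((hΓ m).and (hΔ m)).frequently.filter_mono (Ultrafilter.of_le _)
  have hαΓ : a α = a Γ := eq_of_forall_wordSet_pref_inter_nonempty hF ha <|
    wordSet_pref_inter_nonempty_of_frequently
      (fun n => (hγ n).mono (antitone_wordSet_pref f α (Nat.le_add_right _ _)))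
      fun m => (hlim m).mono fun _ h => h.1
  have hβΔ : a β = a Δ := eq_of_forall_wordSet_pref_inter_nonempty hF ha <|
    wordSet_pref_inter_nonempty_of_frequently
      (fun n => (hδ n).mono (antitone_wordSet_pref f β (Nat.le_add_right _ _)))
      fun m => (hlim m).mono fun _ h => h.2
  have hΓΔ : a Γ = a Δ := eq_of_forall_wordSet_pref_inter_nonempty hF ha fun m => by
    obtain ⟨n, hγΓ, hδΔ⟩ := (hlim m).exists
    exact ⟨a (γ n), hγΓ ▸ ha (γ n) m, hγδ n ▸ hδΔ ▸ ha (δ n) m⟩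
  exact hne (hαΓ.trans (hΓΔ.trans hβΔ.symm))

/-- **Proposition 3.7 d).** If `a_α ≠ a_β`, then `X̃_{[α]_{n₀}} ∩ X̃_{[β]_{n₀}} = ∅`
for some `n₀ ∈ ℕ`. -/
theorem XtSet_separation {X I : Type*} [Finite I] [Nonempty I]
    (f : I → X → X) (hF : HasAttractor f)
    (a : (ℕ → I) → X) (ha : ∀ (α : ℕ → I) (n : ℕ), a α ∈ WordSet f (Pref α n)) :
    ∀ α β : ℕ → I, a α ≠ a β →
      ∃ n₀ : ℕ, XtSet f a (Pref α n₀) ∩ XtSet f a (Pref β n₀) = ∅ :=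
  XtSet_separation_general f hF a ha
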